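/- arXiv:math/0607757 — 2 statements merged into one kernel-verified Lean document; each statement's English description precedes it below -/
import Mathlib

section
/- Let (X, 𝒜, μ) be a probability space, let f : X → X be measure-preserving and ergodic, and let Γ ∈ 𝒜 with μ(Γ) > 0. For x ∈ Γ let r(x) = min{n ≥ 1 : f^n(x) ∈ Γ} (finite for μ-almost every x ∈ Γ by Poincaré recurrence) and g(x) = f^{r(x)}(x). Let d ≥ 1 and let A : X → GL(d,ℂ) be any map; write A^m(x) = A(f^{m−1}(x)) ⋯ A(x), B(x) = A^{r(x)}(x) for x ∈ Γ, and B^n(x) = B(g^{n−1}(x)) ⋯ B(x). Then for μ-almost every x ∈ Γ, all iterates g^j(x) (j ≥ 0) lie in Γ with finite return time, and for every v ∈ ℂ^d ∖ {0} and every χ ∈ ℝ: if lim_{m→∞} (1/m)·log‖A^m(x)v‖ = χ, then lim_{n→∞} (1/n)·log‖B^n(x)v‖ = χ/μ(Γ). -/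
/-!
Birkhoff's ergodic theorem for bounded observables, a consequence of Garsia's maximal
inequality, shows that a typical orbit visits `Γ` with frequency `μ Γ`. For `x ∈ Γ` exactly
`n` of the times `0, …, T n - 1` are visits, where `T n = r x + r (g x) + ⋯ + r (g^{n-1} x)`
is the `n`-th return time; hence `T n / n → 1 / μ Γ`. Since `B^n(x) = A^{T n}(x)`, the
exponent of `B` is that of `A` along the subsequence `T n`, rescaled by `T n / n`.
-/

open MeasureTheory Filter

/-- The first return time of `x` to `Γ` under `f` (`0` if `x` never returns). -/
noncomputable def retTime {X : Type} (f : X → X) (Γ : Set X) (x : X) : ℕ :=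
  sInf {n : ℕ | 1 ≤ n ∧ f^[n] x ∈ Γ}

/-- The first return map `g(x) = f^{r(x)}(x)`. -/
noncomputable def retMap {X : Type} (f : X → X) (Γ : Set X) (x : X) : X :=
  f^[retTime f Γ x] x

/-- The cocycle products `A^m(x) = A(f^{m-1}(x)) ⋯ A(f(x)) A(x)`. -/
def matCoc {X : Type} {d : ℕ} (f : X → X) (A : X → Matrix.GeneralLinearGroup (Fin d) ℂ) :
    ℕ → X → Matrix.GeneralLinearGroup (Fin d) ℂ
  | 0, _ => 1
  | n + 1, x => matCoc f A n (f x) * A x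

/-- The cocycle `B` induced over the first return map: `B(x) = A^{r(x)}(x)`, iterated. -/
noncomputable def indCoc {X : Type} {d : ℕ} (f : X → X) (Γ : Set X)
    (A : X → Matrix.GeneralLinearGroup (Fin d) ℂ) :
    ℕ → X → Matrix.GeneralLinearGroup (Fin d) ℂ :=
  matCoc (retMap f Γ) (fun x => matCoc f A (retTime f Γ x) x)

open Topology Finset

section MaximalErgodic

variable {X : Type*} {f : X → X} {φ : X → ℝ} {C : ℝ}

noncomputable def birkhoffSumMax (f : X → X) (φ : X → ℝ) (N : ℕ) (x : X) : ℝ :=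
  (range (N + 1)).sup' nonempty_range_add_one fun k => birkhoffSum f φ k x

lemma exists_birkhoffSumMax_eq (N : ℕ) (x : X) :
    ∃ k ≤ N, birkhoffSumMax f φ N x = birkhoffSum f φ k x := by
  obtain ⟨k, hk, hkx⟩ :=
    exists_mem_eq_sup' nonempty_range_add_one fun k => birkhoffSum f φ k x
  exact ⟨k, Nat.lt_succ_iff.1 (mem_range.1 hk), hkx⟩

lemma birkhoffSum_le_birkhoffSumMax {k N : ℕ} (hk : k ≤ N) (x : X) :
    birkhoffSum f φ k x ≤ birkhoffSumMax f φ N x :=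
  le_sup' (fun k => birkhoffSum f φ k x) (mem_range.2 (Nat.lt_succ_of_le hk))

lemma birkhoffSumMax_nonneg (N : ℕ) (x : X) : 0 ≤ birkhoffSumMax f φ N x := by
  simpa using birkhoffSum_le_birkhoffSumMax (f := f) (φ := φ) N.zero_le x

lemma birkhoffSumMax_mono (x : X) : Monotone (birkhoffSumMax f φ · x) := fun _ _ h =>
  sup'_mono _ (range_subset_range.2 (Nat.succ_le_succ h)) _

lemma birkhoffSumMax_le_add_apply {N : ℕ} {x : X} (h : 0 < birkhoffSumMax f φ N x) :
    birkhoffSumMax f φ N x ≤ φ x + birkhoffSumMax f φ N (f x) := by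
  obtain ⟨k, hkN, hk⟩ := exists_birkhoffSumMax_eq (f := f) (φ := φ) N x
  rw [hk] at h ⊢
  cases k with
  | zero => simp at h
  | succ j =>
    rw [birkhoffSum_succ']
    exact add_le_add_right (birkhoffSum_le_birkhoffSumMax (by omega) _) _

lemma abs_birkhoffSum_le (hC : ∀ x, |φ x| ≤ C) (n : ℕ) (x : X) :
    |birkhoffSum f φ n x| ≤ n * C :=
  (abs_sum_le_sum_abs _ _).trans (by simpa using sum_le_sum (s := range n) fun k _ => hC (f^[k] x))

lemma abs_birkhoffSumMax_le (hC : ∀ x, |φ x| ≤ C) (N : ℕ) (x : X) :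
    |birkhoffSumMax f φ N x| ≤ N * C := by
  obtain ⟨k, hkN, hk⟩ := exists_birkhoffSumMax_eq (f := f) (φ := φ) N x
  have hC0 : 0 ≤ C := (abs_nonneg _).trans (hC x)
  rw [hk]
  exact (abs_birkhoffSum_le hC k x).trans (by gcongr)

variable [MeasurableSpace X] {μ : Measure X}

lemma measurable_birkhoffSum (hf : Measurable f) (hφ : Measurable φ) (n : ℕ) :
    Measurable (birkhoffSum f φ n) :=
  Finset.measurable_sum _ fun k _ => hφ.comp (hf.iterate k)

lemma measurable_birkhoffSumMax (hf : Measurable f) (hφ : Measurable φ) (N : ℕ) :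
    Measurable (birkhoffSumMax f φ N) :=
  Finset.measurable_range_sup'' fun k _ => measurable_birkhoffSum hf hφ k

lemma integrable_of_abs_le [IsFiniteMeasure μ] {ψ : X → ℝ} (hψ : Measurable ψ)
    (hC : ∀ x, |ψ x| ≤ C) : Integrable ψ μ :=
  .of_bound hψ.aestronglyMeasurable C (ae_of_all _ hC)

theorem maximal_ergodic_theorem [IsFiniteMeasure μ] (hf : MeasurePreserving f μ μ)
    (hφ : Measurable φ) (hC : ∀ x, |φ x| ≤ C) :
    0 ≤ ∫ x in {x | ∃ n, 0 < birkhoffSum f φ n x}, φ x ∂μ := by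
  have hM := measurable_birkhoffSumMax hf.measurable hφ
  have hMint N : Integrable (birkhoffSumMax f φ N) μ :=
    integrable_of_abs_le (hM N) (abs_birkhoffSumMax_le hC N)
  set E : ℕ → Set X := fun N => {x | 0 < birkhoffSumMax f φ N x}
  have hEm N : MeasurableSet (E N) := measurableSet_lt measurable_const (hM N)
  have hE : ⋃ N, E N = {x | ∃ n, 0 < birkhoffSum f φ n x} := by
    ext x
    simp only [E, Set.mem_iUnion, Set.mem_ofPred_eq]
    constructor
    · rintro ⟨N, hN⟩
      obtain ⟨k, -, hk⟩ := exists_birkhoffSumMax_eq (f := f) (φ := φ) N x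
      exact ⟨k, hk ▸ hN⟩
    · rintro ⟨n, hn⟩
      exact ⟨n, hn.trans_le (birkhoffSum_le_birkhoffSumMax le_rfl x)⟩
  have hEN N : 0 ≤ ∫ x in E N, φ x ∂μ := by
    set M := birkhoffSumMax f φ N
    have hMf : Integrable (fun x => M (f x)) μ :=
      (hf.integrable_comp (hM N).aestronglyMeasurable).2 (hMint N)
    have hM_E : ∫ x, M x ∂μ = ∫ x in E N, M x ∂μ :=
      (setIntegral_eq_integral_of_forall_compl_eq_zero fun x hx =>
        le_antisymm (not_lt.1 hx) (birkhoffSumMax_nonneg N x)).symm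
    calc (0 : ℝ) = ∫ x, M x ∂μ - ∫ x, M (f x) ∂μ := by
          rw [← integral_map hf.aemeasurable (hM N).aestronglyMeasurable, hf.map_eq, sub_self]
      _ ≤ ∫ x in E N, M x ∂μ - ∫ x in E N, M (f x) ∂μ := by
          rw [hM_E]
          exact sub_le_sub_left (setIntegral_le_integral hMf
            (ae_of_all _ fun x => birkhoffSumMax_nonneg N (f x))) _
      _ = ∫ x in E N, (M x - M (f x)) ∂μ :=
          (integral_sub (hMint N).integrableOn hMf.integrableOn).symm
      _ ≤ ∫ x in E N, φ x ∂μ :=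
          setIntegral_mono_on ((hMint N).sub hMf).integrableOn
            (integrable_of_abs_le hφ hC).integrableOn (hEm N) fun x hx =>
            sub_le_iff_le_add.2 (birkhoffSumMax_le_add_apply hx)
  rw [← hE]
  exact ge_of_tendsto' (tendsto_setIntegral_of_monotone hEm
    (fun _ _ h x hx => hx.trans_le (birkhoffSumMax_mono x h))
    (integrable_of_abs_le hφ hC).integrableOn) hEN

end MaximalErgodic

lemma limsup_add_eq_of_tendsto_zero {ι : Type*} {l : Filter ι} [l.NeBot] {u v : ι → ℝ}
    (hu : IsBoundedUnder (· ≤ ·) l u) (hu' : IsBoundedUnder (· ≥ ·) l u)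
    (hv : Tendsto v l (𝓝 0)) :
    limsup (u + v) l = limsup u l :=
  le_antisymm
    ((limsup_add_le hu' hu hv.isBoundedUnder_ge.isCoboundedUnder_le hv.isBoundedUnder_le).trans
      (by rw [hv.limsup_eq, add_zero]))
    ((le_of_eq (by rw [hv.liminf_eq, add_zero])).trans
      (le_limsup_add hu hu'.isCoboundedUnder_le hv.isBoundedUnder_le hv.isBoundedUnder_ge))

section Birkhoff

variable {X : Type*} {f : X → X} {φ : X → ℝ} {C : ℝ}

lemma abs_birkhoffAverage_le (hC : ∀ x, |φ x| ≤ C) (n : ℕ) (x : X) :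
    |birkhoffAverage ℝ f φ n x| ≤ C := by
  rcases Nat.eq_zero_or_pos n with rfl | hn
  · simpa using (abs_nonneg _).trans (hC x)
  · rw [birkhoffAverage, smul_eq_mul, abs_mul, abs_inv, Nat.abs_cast,
      inv_mul_le_iff₀ (by exact_mod_cast hn)]
    exact abs_birkhoffSum_le hC n x

lemma isBoundedUnder_le_birkhoffAverage (hC : ∀ x, |φ x| ≤ C) (x : X) :
    IsBoundedUnder (· ≤ ·) atTop (birkhoffAverage ℝ f φ · x) :=
  isBoundedUnder_of ⟨C, fun n => (abs_le.1 (abs_birkhoffAverage_le hC n x)).2⟩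

lemma isBoundedUnder_ge_birkhoffAverage (hC : ∀ x, |φ x| ≤ C) (x : X) :
    IsBoundedUnder (· ≥ ·) atTop (birkhoffAverage ℝ f φ · x) :=
  isBoundedUnder_of ⟨-C, fun n => (abs_le.1 (abs_birkhoffAverage_le hC n x)).1⟩

lemma limsup_birkhoffAverage_apply (hC : ∀ x, |φ x| ≤ C) (x : X) :
    limsup (birkhoffAverage ℝ f φ · (f x)) atTop =
      limsup (birkhoffAverage ℝ f φ · x) atTop := by
  have hφ : Bornology.IsBounded (Set.range φ) :=
    (Metric.isBounded_Icc (-C) C).subset (Set.range_subset_iff.2 fun y => abs_le.1 (hC y))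
  rw [← limsup_add_eq_of_tendsto_zero (isBoundedUnder_le_birkhoffAverage hC x)
    (isBoundedUnder_ge_birkhoffAverage hC x)
    (tendsto_birkhoffAverage_apply_sub_birkhoffAverage' ℝ hφ f x)]
  congr 1
  ext n
  simp

variable [MeasurableSpace X] {μ : Measure X} [IsProbabilityMeasure μ]

lemma ae_eventually_birkhoffAverage_lt (herg : Ergodic f μ) (hφ : Measurable φ)
    (hC : ∀ x, |φ x| ≤ C) :
    ∀ᵐ x ∂μ, ∀ b, ∫ y, φ y ∂μ < b →
      ∀ᶠ n in atTop, birkhoffAverage ℝ f φ n x < b := by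
  set L : X → ℝ := fun x => limsup (birkhoffAverage ℝ f φ · x) atTop
  have hLm : Measurable L := Measurable.limsup fun n =>
    (measurable_birkhoffSum herg.measurable hφ n).const_smul ((n : ℝ)⁻¹)
  obtain ⟨c, hc⟩ := herg.ae_eq_const_of_ae_eq_comp₀ hLm.nullMeasurable
    (ae_of_all _ fun x => limsup_birkhoffAverage_apply hC x)
  suffices hcφ : c ≤ ∫ y, φ y ∂μ by
    filter_upwards [hc] with x hx b hb
    exact eventually_lt_of_limsup_lt ((hx.trans_le hcφ).trans_lt hb)
      (isBoundedUnder_le_birkhoffAverage hC x)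
  by_contra! hlt
  obtain ⟨α, hφα, hαc⟩ := exists_between hlt
  -- `limsup > α` a.e. makes some sum of `φ - α` positive, so the maximal inequality
  -- gives `α ≤ ∫ φ`.
  have hpos : ∀ᵐ x ∂μ, x ∈ {x | ∃ n, 0 < birkhoffSum f (fun y => φ y - α) n x} := by
    filter_upwards [hc] with x hx
    have hαL : α < L x := hx ▸ hαc
    obtain ⟨n, hn, hn0⟩ := ((frequently_lt_of_lt_limsup
      (isBoundedUnder_ge_birkhoffAverage hC x).isCoboundedUnder_le hαL).and_eventually
      (eventually_gt_atTop 0)).exists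
    refine ⟨n, ?_⟩
    have hn0' : (0 : ℝ) < n := by exact_mod_cast hn0
    rw [birkhoffAverage, smul_eq_mul, lt_inv_mul_iff₀ hn0'] at hn
    simp only [birkhoffSum, sum_sub_distrib, sum_const, card_range, nsmul_eq_mul]
    exact sub_pos.2 hn
  have hmax := maximal_ergodic_theorem (φ := fun y => φ y - α) herg.toMeasurePreserving
    (hφ.sub measurable_const) (C := C + |α|) fun y => (abs_sub _ _).trans (by linarith [hC y])
  rw [Measure.restrict_eq_self_of_ae_mem hpos,
    integral_sub (integrable_of_abs_le hφ hC) (integrable_const α), integral_const] at hmax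
  simp only [probReal_univ, one_smul, sub_nonneg] at hmax
  linarith

theorem ae_tendsto_birkhoffAverage (herg : Ergodic f μ) (hφ : Measurable φ)
    (hC : ∀ x, |φ x| ≤ C) :
    ∀ᵐ x ∂μ, Tendsto (birkhoffAverage ℝ f φ · x) atTop (𝓝 (∫ y, φ y ∂μ)) := by
  have hlow := ae_eventually_birkhoffAverage_lt herg hφ.neg (C := C) (by simpa using hC)
  filter_upwards [ae_eventually_birkhoffAverage_lt herg hφ hC, hlow] with x hup hlow
  refine tendsto_order.2 ⟨fun a ha => ?_, hup⟩
  filter_upwards [hlow (-a) (by simpa [integral_neg] using ha)] with n hn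
  simpa [birkhoffAverage_neg] using hn

end Birkhoff

section Induced

variable {X : Type} (f : X → X)

lemma iterate_induced (r : X → ℕ) (j : ℕ) (x : X) :
    (fun y => f^[r y] y)^[j] x = f^[birkhoffSum (fun y => f^[r y] y) r j x] x := by
  induction j with
  | zero => rfl
  | succ j ih => rw [Function.iterate_succ_apply', ih, birkhoffSum_succ, ih, add_comm,
      Function.iterate_add_apply]

variable {d : ℕ} (A : X → Matrix.GeneralLinearGroup (Fin d) ℂ)

lemma matCoc_add (m n : ℕ) (x : X) :
    matCoc f A (m + n) x = matCoc f A m (f^[n] x) * matCoc f A n x := by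
  induction n generalizing x with
  | zero => simp [matCoc]
  | succ n ih => rw [← add_assoc, matCoc, ih, Function.iterate_succ_apply, matCoc, mul_assoc]

lemma matCoc_induced (r : X → ℕ) (n : ℕ) (x : X) :
    matCoc (fun y => f^[r y] y) (fun y => matCoc f A (r y) y) n x =
      matCoc f A (birkhoffSum (fun y => f^[r y] y) r n x) x := by
  induction n generalizing x with
  | zero => rfl
  | succ n ih => rw [matCoc, ih, birkhoffSum_succ', add_comm, matCoc_add]

end Induced

section Return

variable {X : Type} {f : X → X} {Γ : Set X} {x : X}

lemma retMap_iterate (j : ℕ) (x : X) :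
    (retMap f Γ)^[j] x = f^[birkhoffSum (retMap f Γ) (retTime f Γ) j x] x :=
  iterate_induced f (retTime f Γ) j x

lemma indCoc_eq_matCoc {d : ℕ} (A : X → Matrix.GeneralLinearGroup (Fin d) ℂ)
    (n : ℕ) (x : X) :
    indCoc f Γ A n x = matCoc f A (birkhoffSum (retMap f Γ) (retTime f Γ) n x) x :=
  matCoc_induced f A (retTime f Γ) n x

lemma retTime_mem {y : X} (h : {n | 1 ≤ n ∧ f^[n] y ∈ Γ}.Nonempty) :
    1 ≤ retTime f Γ y ∧ retMap f Γ y ∈ Γ :=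
  Nat.sInf_mem h

lemma birkhoffSum_indicator_retTime {y : X} (hy : y ∈ Γ)
    (h : {n | 1 ≤ n ∧ f^[n] y ∈ Γ}.Nonempty) :
    birkhoffSum f (Γ.indicator 1) (retTime f Γ y) y = (1 : ℝ) := by
  obtain ⟨k, hk⟩ := Nat.exists_eq_add_of_le' (retTime_mem h).1
  have hkΓ : ∀ i < k, f^[i] (f y) ∉ Γ := fun i hi hiΓ =>
    Nat.notMem_of_lt_sInf (show i + 1 < retTime f Γ y by omega)
      ⟨by omega, by rwa [Function.iterate_succ_apply]⟩
  rw [hk, birkhoffSum_succ', Set.indicator_of_mem hy, Pi.one_apply, add_eq_left]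
  exact sum_eq_zero fun i hi => Set.indicator_of_notMem (hkΓ i (mem_range.1 hi)) _

lemma frequently_mem_of_tendsto_birkhoffAverage {θ : ℝ}
    (h : Tendsto (birkhoffAverage ℝ f (Γ.indicator 1) · x) atTop (𝓝 θ)) (hθ : 0 < θ) :
    ∃ᶠ n in atTop, f^[n] x ∈ Γ := by
  have hS : Tendsto (birkhoffSum f (Γ.indicator (1 : X → ℝ)) · x) atTop atTop := by
    refine (tendsto_natCast_atTop_atTop.atTop_mul_pos hθ h).congr fun n => ?_
    rcases eq_or_ne n 0 with rfl | hn
    · simp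
    · simp [birkhoffAverage, hn]
  rw [frequently_atTop]
  intro N
  by_contra! hN
  have hconst k : birkhoffSum f (Γ.indicator (1 : X → ℝ)) (k + N) x =
      birkhoffSum f (Γ.indicator 1) N x := by
    rw [add_comm, birkhoffSum_add, add_eq_left]
    exact sum_eq_zero fun i _ => Set.indicator_of_notMem
      (by rw [← Function.iterate_add_apply]; exact hN _ (by omega)) _
  obtain ⟨k, hk⟩ := ((hS.comp (tendsto_add_atTop_nat N)).eventually_gt_atTop
    (birkhoffSum f (Γ.indicator 1) N x)).exists
  exact hk.ne' (hconst k)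

lemma nonempty_returns_iterate (hret : ∃ᶠ n in atTop, f^[n] x ∈ Γ) (m : ℕ) :
    {n | 1 ≤ n ∧ f^[n] (f^[m] x) ∈ Γ}.Nonempty := by
  obtain ⟨n, hn, hnΓ⟩ := frequently_atTop.1 hret (m + 1)
  refine ⟨n - m, by omega, ?_⟩
  rwa [← Function.iterate_add_apply, Nat.sub_add_cancel (by omega)]

lemma nonempty_returns_retMap_iterate (hret : ∃ᶠ n in atTop, f^[n] x ∈ Γ) (j : ℕ) :
    {n | 1 ≤ n ∧ f^[n] ((retMap f Γ)^[j] x) ∈ Γ}.Nonempty := by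
  rw [retMap_iterate]
  exact nonempty_returns_iterate hret _

lemma retMap_iterate_mem (hret : ∃ᶠ n in atTop, f^[n] x ∈ Γ) (hx : x ∈ Γ) (j : ℕ) :
    (retMap f Γ)^[j] x ∈ Γ := by
  cases j with
  | zero => exact hx
  | succ j =>
    rw [Function.iterate_succ_apply']
    exact (retTime_mem (nonempty_returns_retMap_iterate hret j)).2

lemma le_birkhoffSum_retTime (hret : ∃ᶠ n in atTop, f^[n] x ∈ Γ) (j : ℕ) :
    j ≤ birkhoffSum (retMap f Γ) (retTime f Γ) j x := by
  induction j with
  | zero => exact le_rfl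
  | succ j ih =>
    rw [birkhoffSum_succ]
    exact Nat.add_le_add ih (retTime_mem (nonempty_returns_retMap_iterate hret j)).1

lemma birkhoffSum_indicator_birkhoffSum_retTime (hret : ∃ᶠ n in atTop, f^[n] x ∈ Γ)
    (hx : x ∈ Γ) (j : ℕ) :
    birkhoffSum f (Γ.indicator 1) (birkhoffSum (retMap f Γ) (retTime f Γ) j x) x =
      (j : ℝ) := by
  induction j with
  | zero => simp
  | succ j ih =>
    rw [birkhoffSum_succ, birkhoffSum_add, ih, ← retMap_iterate,
      birkhoffSum_indicator_retTime (retMap_iterate_mem hret hx j)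
        (nonempty_returns_retMap_iterate hret j), Nat.cast_succ]

lemma tendsto_birkhoffSum_retTime_div {θ : ℝ} (hret : ∃ᶠ n in atTop, f^[n] x ∈ Γ)
    (hx : x ∈ Γ) (h : Tendsto (birkhoffAverage ℝ f (Γ.indicator 1) · x) atTop (𝓝 θ))
    (hθ : θ ≠ 0) :
    Tendsto (fun n => ((birkhoffSum (retMap f Γ) (retTime f Γ) n x : ℕ) : ℝ) / n) atTop
      (𝓝 θ⁻¹) := by
  have hT := tendsto_atTop_mono (le_birkhoffSum_retTime hret) tendsto_id
  refine ((h.comp hT).inv₀ hθ).congr fun n => ?_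
  simp [birkhoffAverage, birkhoffSum_indicator_birkhoffSum_retTime hret hx, div_eq_mul_inv,
    mul_comm]

end Return

lemma tendsto_one_div_mul_comp {F : ℕ → ℝ} {T : ℕ → ℕ} {χ c : ℝ}
    (hF : Tendsto (fun m : ℕ => 1 / (m : ℝ) * F m) atTop (𝓝 χ)) (hT : Tendsto T atTop atTop)
    (hTc : Tendsto (fun n : ℕ => (T n : ℝ) / n) atTop (𝓝 c)) :
    Tendsto (fun n : ℕ => 1 / (n : ℝ) * F (T n)) atTop (𝓝 (χ * c)) := by
  refine ((hF.comp hT).mul hTc).congr' ?_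
  filter_upwards [hT.eventually_ne_atTop 0] with n hTn
  have : (T n : ℝ) ≠ 0 := by exact_mod_cast hTn
  simp only [Function.comp_apply]
  field_simp

theorem stmt14_general {X : Type} [MeasurableSpace X] (μ : Measure X) [IsProbabilityMeasure μ]
    (f : X → X) (herg : Ergodic f μ)
    (Γ : Set X) (hΓm : MeasurableSet Γ) (hΓ : 0 < μ Γ)
    (d : ℕ) (A : X → Matrix.GeneralLinearGroup (Fin d) ℂ) :
    ∀ᵐ x ∂μ, x ∈ Γ →
      ((∀ j : ℕ, (retMap f Γ)^[j] x ∈ Γ ∧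
          {n : ℕ | 1 ≤ n ∧ f^[n] ((retMap f Γ)^[j] x) ∈ Γ}.Nonempty) ∧
        ∀ v : Fin d → ℂ, v ≠ 0 → ∀ χ : ℝ,
          Tendsto (fun m : ℕ =>
              (1 / (m : ℝ)) * Real.log ‖((matCoc f A m x : Matrix (Fin d) (Fin d) ℂ)).mulVec v‖)
            atTop (nhds χ) →
          Tendsto (fun n : ℕ =>
              (1 / (n : ℝ)) * Real.log ‖((indCoc f Γ A n x : Matrix (Fin d) (Fin d) ℂ)).mulVec v‖)
            atTop (nhds (χ / (μ Γ).toReal))) := by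
  have hθ : 0 < (μ Γ).toReal := ENNReal.toReal_pos hΓ.ne' (measure_ne_top μ Γ)
  have hvisits := ae_tendsto_birkhoffAverage (φ := Γ.indicator (1 : X → ℝ)) herg
    (measurable_one.indicator hΓm) (C := 1) fun y => by by_cases hy : y ∈ Γ <;> simp [hy]
  rw [integral_indicator_one hΓm, measureReal_def] at hvisits
  filter_upwards [hvisits] with x hx_avg hx
  have hret := frequently_mem_of_tendsto_birkhoffAverage hx_avg hθ
  refine ⟨fun j => ⟨retMap_iterate_mem hret hx j, nonempty_returns_retMap_iterate hret j⟩,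
    fun v _ χ hχ => ?_⟩
  simp only [indCoc_eq_matCoc, div_eq_mul_inv]
  exact tendsto_one_div_mul_comp hχ (tendsto_atTop_mono (le_birkhoffSum_retTime hret) tendsto_id)
    (tendsto_birkhoffSum_retTime_div hret hx hx_avg hθ.ne')

/-- **Section A.1 (Inducing).** For `μ`-a.e. `x ∈ Γ`, all the iterates of `x` under the
first return map `g` lie in `Γ` with finite return time, and if the Lyapunov exponent of
the cocycle `A` over `f` along `v` at `x` is `χ`, then the exponent of the induced
cocycle `B` over `g` along `v` at `x` is `χ/μ(Γ)`. -/
theorem stmt14 {X : Type} [MeasurableSpace X] (μ : Measure X) [IsProbabilityMeasure μ]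
    (f : X → X) (herg : Ergodic f μ)
    (Γ : Set X) (hΓm : MeasurableSet Γ) (hΓ : 0 < μ Γ)
    (d : ℕ) (hd : 1 ≤ d) (A : X → Matrix.GeneralLinearGroup (Fin d) ℂ) :
    ∀ᵐ x ∂μ, x ∈ Γ →
      ((∀ j : ℕ, (retMap f Γ)^[j] x ∈ Γ ∧
          {n : ℕ | 1 ≤ n ∧ f^[n] ((retMap f Γ)^[j] x) ∈ Γ}.Nonempty) ∧
        ∀ v : Fin d → ℂ, v ≠ 0 → ∀ χ : ℝ,
          Tendsto (fun m : ℕ =>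
              (1 / (m : ℝ)) * Real.log ‖((matCoc f A m x : Matrix (Fin d) (Fin d) ℂ)).mulVec v‖)
            atTop (nhds χ) →
          Tendsto (fun n : ℕ =>
              (1 / (n : ℝ)) * Real.log ‖((indCoc f Γ A n x : Matrix (Fin d) (Fin d) ℂ)).mulVec v‖)
            atTop (nhds (χ / (μ Γ).toReal))) :=
  stmt14_general μ f herg Γ hΓm hΓ d A
end

section
/- Let X be a compact metric space, let N ⊆ X be a closed subset, and let Q : X → X be a Borel measurable map whose restriction to X ∖ N is continuous. Let (P_n) be a sequence of continuous maps X → X converging to Q uniformly on every compact subset of X ∖ N. Let (ν_n) be Borel probability measures on X converging weakly to a Borel probability ν with ν(N) = 0. Then the pushforwards (P_n)_*ν_n converge weakly to Q_*ν. -/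
open MeasureTheory Filter Set Topology

/-! Take a Urysohn function `φ` with support in a compact subset of `Nᶜ` and `∫ (1 - φ) dν`
small (possible as `ν(N) = 0`). Since `Pₙ → Q` uniformly on the support of `φ`,
`(g ∘ Pₙ) φ → (g ∘ Q) φ` uniformly on all of `X`, and the limit is continuous because `φ`
vanishes near `N`; weak convergence then handles this part. The remainders `(g ∘ Pₙ)(1 - φ)`
and `(g ∘ Q)(1 - φ)` have integrals bounded by `‖g‖ ∫ (1 - φ) dνₙ → ‖g‖ ∫ (1 - φ) dν`. -/

theorem ContinuousOn.aemeasurable_of_measure_compl_eq_zero {α β : Type*} [TopologicalSpace α]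
    [MeasurableSpace α] [OpensMeasurableSpace α] [TopologicalSpace β] [MeasurableSpace β]
    [BorelSpace β] {f : α → β} {N : Set α} {μ : Measure α} (hf : ContinuousOn f Nᶜ)
    (hN : MeasurableSet N) (hμN : μ N = 0) : AEMeasurable f μ := by
  have := hf.aemeasurable (μ := μ) hN.compl
  rwa [Measure.restrict_eq_self_of_ae_mem (s := Nᶜ) (compl_mem_ae_iff.mpr hμN)] at this

theorem dist_integral_integral_mul_le {α : Type*} [MeasurableSpace α] {μ : Measure α}
    [IsFiniteMeasure μ] {g φ : α → ℝ} {C : ℝ} (hg : AEStronglyMeasurable g μ)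
    (hgC : ∀ x, ‖g x‖ ≤ C) (hφ : AEStronglyMeasurable φ μ) (hφ01 : ∀ x, φ x ∈ Icc 0 1) :
    dist (∫ x, g x ∂μ) (∫ x, g x * φ x ∂μ) ≤ C * ∫ x, (1 - φ x) ∂μ := by
  have hφ1 : ∀ x, ‖φ x‖ ≤ 1 := fun x => by
    rw [Real.norm_of_nonneg (hφ01 x).1]; exact (hφ01 x).2
  have hgi : Integrable g μ := .of_bound hg C (ae_of_all _ hgC)
  have hχi : Integrable (fun x => 1 - φ x) μ :=
    (integrable_const 1).sub (.of_bound hφ 1 (ae_of_all _ hφ1))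
  calc dist (∫ x, g x ∂μ) (∫ x, g x * φ x ∂μ)
      = ‖∫ x, g x * (1 - φ x) ∂μ‖ := by
        rw [dist_eq_norm, ← integral_sub hgi (hgi.mul_bdd hφ (ae_of_all _ hφ1))]
        simp only [mul_one_sub]
    _ ≤ ∫ x, C * (1 - φ x) ∂μ := by
        refine norm_integral_le_of_norm_le (hχi.const_mul C) (ae_of_all _ fun x => ?_)
        rw [norm_mul, Real.norm_of_nonneg (sub_nonneg.mpr (hφ01 x).2)]
        exact mul_le_mul_of_nonneg_right (hgC x) (sub_nonneg.mpr (hφ01 x).2)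
    _ = C * ∫ x, (1 - φ x) ∂μ := integral_const_mul C _

theorem TendstoUniformlyOn.mul_of_tsupport_subset {α ι : Type*} [TopologicalSpace α]
    {l : Filter ι} {F : ι → α → ℝ} {f : α → ℝ} {φ : α → ℝ}
    (hF : TendstoUniformlyOn F f l (tsupport φ)) (hφ : ∀ x, ‖φ x‖ ≤ 1) :
    TendstoUniformly (fun n x => F n x * φ x) (fun x => f x * φ x) l := by
  rw [Metric.tendstoUniformly_iff]
  intro ε hε
  filter_upwards [Metric.tendstoUniformlyOn_iff.mp hF ε hε] with n hn x
  by_cases hx : x ∈ tsupport φ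
  · calc dist (f x * φ x) (F n x * φ x) = dist (f x) (F n x) * ‖φ x‖ := by
          simp only [Real.dist_eq, ← sub_mul, abs_mul, Real.norm_eq_abs]
      _ ≤ dist (f x) (F n x) := mul_le_of_le_one_right dist_nonneg (hφ x)
      _ < ε := hn x hx
  · simpa [image_eq_zero_of_notMem_tsupport hx] using hε

section CompactSpace

variable {X : Type*} [TopologicalSpace X] [CompactSpace X] [MeasurableSpace X] [BorelSpace X]

theorem tendsto_integral_of_tendsto_continuousMap {ν : ℕ → Measure X}
    [∀ n, IsProbabilityMeasure (ν n)] {μ : Measure X}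
    (hweak : ∀ g : C(X, ℝ), Tendsto (fun n => ∫ x, g x ∂ν n) atTop (𝓝 (∫ x, g x ∂μ)))
    {F : ℕ → C(X, ℝ)} {h : C(X, ℝ)} (hF : Tendsto F atTop (𝓝 h)) :
    Tendsto (fun n => ∫ x, F n x ∂ν n) atTop (𝓝 (∫ x, h x ∂μ)) := by
  have integrable (g : C(X, ℝ)) (n : ℕ) : Integrable g (ν n) :=
    g.continuous.integrable_of_hasCompactSupport (.of_compactSpace _)
  refine (hweak h).congr_dist (squeeze_zero (fun n => dist_nonneg) (fun n => ?_)
    (tendsto_iff_norm_sub_tendsto_zero.mp hF))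
  calc dist (∫ x, h x ∂ν n) (∫ x, F n x ∂ν n) = ‖∫ x, (F n - h) x ∂ν n‖ := by
        rw [dist_comm, dist_eq_norm, ← integral_sub (integrable _ n) (integrable _ n)]; rfl
    _ ≤ ‖F n - h‖ := by
        simpa using norm_integral_le_of_norm_le_const (ae_of_all (ν n) (F n - h).norm_coe_le_norm)

variable [TopologicalSpace.PseudoMetrizableSpace X]

theorem exists_continuous_tsupport_subset_compl_integral_one_sub_lt {μ : Measure X}
    [IsFiniteMeasure μ] {N : Set X} (hN : IsClosed N) (hμN : μ N = 0) {δ : ℝ} (hδ : 0 < δ) :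
    ∃ φ : C(X, ℝ), tsupport φ ⊆ Nᶜ ∧ (∀ x, φ x ∈ Icc 0 1) ∧ ∫ x, (1 - φ x) ∂μ < δ := by
  obtain ⟨K, hKN, hK, hμK⟩ := hN.isOpen_compl.measurableSet.exists_isClosed_sdiff_lt
    (measure_ne_top μ _) (ENNReal.ofReal_pos.mpr hδ).ne'
  obtain ⟨φ, hφN, hφK, hφ01⟩ :=
    exists_tsupport_one_of_isOpen_isClosed hN.isOpen_compl isClosed_closure.isCompact hK hKN
  refine ⟨φ, hφN, hφ01, ?_⟩
  have hKc : Kᶜ \ N = Nᶜ \ K := by ext; simp [and_comm]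
  calc ∫ x, (1 - φ x) ∂μ ≤ ∫ x, Kᶜ.indicator 1 x ∂μ := by
        refine integral_mono ((integrable_const 1).sub
          (φ.continuous.integrable_of_hasCompactSupport (.of_compactSpace _)))
          ((integrable_const 1).indicator hK.isOpen_compl.measurableSet) fun x => ?_
        by_cases hx : x ∈ K
        · simp [hx, hφK hx]
        · simp [hx, (hφ01 x).1]
    _ = μ.real Kᶜ := integral_indicator_one hK.isOpen_compl.measurableSet
    _ < δ := by
        rw [measureReal_def, ← measure_sdiff_null hμN, hKc]
        exact ENNReal.toReal_lt_of_lt_ofReal hμK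

theorem tendsto_integral_of_tendstoUniformlyOn_compl_of_measure_eq_zero {N : Set X}
    (hN : IsClosed N) {ν : ℕ → Measure X} [∀ n, IsProbabilityMeasure (ν n)] {μ : Measure X}
    [IsFiniteMeasure μ]
    (hweak : ∀ g : C(X, ℝ), Tendsto (fun n => ∫ x, g x ∂ν n) atTop (𝓝 (∫ x, g x ∂μ)))
    (hμN : μ N = 0) {F : ℕ → C(X, ℝ)} {f : X → ℝ} {C : ℝ} (hFC : ∀ n x, ‖F n x‖ ≤ C)
    (hfC : ∀ x, ‖f x‖ ≤ C) (hf : ContinuousOn f Nᶜ)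
    (hFf : ∀ K ⊆ Nᶜ, IsCompact K → TendstoUniformlyOn (fun n => F n) f atTop K) :
    Tendsto (fun n => ∫ x, F n x ∂ν n) atTop (𝓝 (∫ x, f x ∂μ)) := by
  rw [Metric.tendsto_nhds]
  intro ε hε
  obtain ⟨δ, hδ, hCδ⟩ := exists_pos_mul_lt (by positivity : 0 < ε / 3) |C|
  obtain ⟨φ, hφN, hφ01, hφμ⟩ :=
    exists_continuous_tsupport_subset_compl_integral_one_sub_lt hN hμN hδ
  have hφ1 : ∀ x, ‖φ x‖ ≤ 1 := fun x => by
    rw [Real.norm_of_nonneg (hφ01 x).1]; exact (hφ01 x).2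
  let fφ : C(X, ℝ) := ⟨fun x => f x * φ x,
    (hf.mul φ.continuous.continuousOn).continuous_of_tsupport_subset hN.isOpen_compl
      (tsupport_mul_subset_right.trans hφN)⟩
  have hcut : Tendsto (fun n => ∫ x, F n x * φ x ∂ν n) atTop (𝓝 (∫ x, f x * φ x ∂μ)) :=
    tendsto_integral_of_tendsto_continuousMap hweak (F := fun n => F n * φ) (h := fφ)
      (ContinuousMap.tendsto_iff_tendstoUniformly.mpr
        ((hFf _ hφN (isClosed_tsupport φ).isCompact).mul_of_tsupport_subset hφ1))
  have hμrest : C * ∫ x, (1 - φ x) ∂μ < ε / 3 :=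
    calc C * ∫ x, (1 - φ x) ∂μ ≤ |C| * δ := by
          exact mul_le_mul (le_abs_self C) hφμ.le
            (integral_nonneg fun x => sub_nonneg.mpr (hφ01 x).2) (abs_nonneg C)
    _ < ε / 3 := hCδ
  have hνrest : ∀ᶠ n in atTop, C * ∫ x, (1 - φ x) ∂ν n < ε / 3 := by
    refine ((hweak (1 - φ)).const_mul C).eventually_lt_const ?_
    simpa using hμrest
  filter_upwards [Metric.tendsto_nhds.mp hcut (ε / 3) (by positivity), hνrest] with n hn hνn
  calc dist (∫ x, F n x ∂ν n) (∫ x, f x ∂μ)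
      ≤ dist (∫ x, F n x ∂ν n) (∫ x, F n x * φ x ∂ν n)
        + dist (∫ x, F n x * φ x ∂ν n) (∫ x, f x * φ x ∂μ)
        + dist (∫ x, f x * φ x ∂μ) (∫ x, f x ∂μ) := dist_triangle4 _ _ _ _
    _ < ε / 3 + ε / 3 + ε / 3 := by
        gcongr
        · exact (dist_integral_integral_mul_le (F n).continuous.aestronglyMeasurable (hFC n)
            φ.continuous.aestronglyMeasurable hφ01).trans_lt hνn
        · rw [dist_comm]
          exact (dist_integral_integral_mul_le
            (hf.aemeasurable_of_measure_compl_eq_zero hN.measurableSet hμN).aestronglyMeasurable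
            hfC φ.continuous.aestronglyMeasurable hφ01).trans_lt hμrest
    _ = ε := by ring

end CompactSpace

theorem stmt18_general {X : Type} [MetricSpace X] [CompactSpace X]
    [MeasurableSpace X] [BorelSpace X]
    (N : Set X) (hN : IsClosed N)
    (Q : X → X) (hQc : ContinuousOn Q Nᶜ)
    (P : ℕ → X → X) (hPc : ∀ n, Continuous (P n))
    (hconv : ∀ K : Set X, K ⊆ Nᶜ → IsCompact K →
      TendstoUniformlyOn (fun n => P n) Q atTop K)
    (ν : ℕ → Measure X) (hνp : ∀ n, IsProbabilityMeasure (ν n))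
    (νlim : Measure X) [IsProbabilityMeasure νlim]
    (hweak : ∀ g : C(X, ℝ),
      Tendsto (fun n => ∫ x, g x ∂(ν n)) atTop (nhds (∫ x, g x ∂νlim)))
    (hνN : νlim N = 0) :
    ∀ g : C(X, ℝ),
      Tendsto (fun n => ∫ x, g x ∂(Measure.map (P n) (ν n))) atTop
        (nhds (∫ x, g x ∂(Measure.map Q νlim))) := by
  intro g
  have := hνp
  have hg := CompactSpace.uniformContinuous_of_continuous g.continuous
  rw [integral_map (hQc.aemeasurable_of_measure_compl_eq_zero hN.measurableSet hνN)
    g.continuous.aestronglyMeasurable]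
  refine (tendsto_integral_of_tendstoUniformlyOn_compl_of_measure_eq_zero hN hweak hνN
    (F := fun n => g.comp ⟨P n, hPc n⟩) (f := g ∘ Q) (fun n x => g.norm_coe_le_norm _)
    (fun x => g.norm_coe_le_norm _) (g.continuous.comp_continuousOn hQc)
    fun K hKN hK => hg.comp_tendstoUniformlyOn (hconv K hKN hK)).congr fun n => ?_
  exact (integral_map (hPc n).aemeasurable g.continuous.aestronglyMeasurable).symm

/-- **Lemma 2.5.** Let `X` be a compact metric space, `N ⊆ X` closed, `Q : X → X` Borel
measurable and continuous off `N`, and `Pₙ : X → X` continuous maps converging to `Q`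
uniformly on compact subsets of `X ∖ N`. If probabilities `νₙ` converge weakly to `ν`
with `ν(N) = 0`, then `(Pₙ)_*νₙ` converges weakly to `Q_*ν`. -/
theorem stmt18 {X : Type} [MetricSpace X] [CompactSpace X]
    [MeasurableSpace X] [BorelSpace X]
    (N : Set X) (hN : IsClosed N)
    (Q : X → X) (hQm : Measurable Q) (hQc : ContinuousOn Q Nᶜ)
    (P : ℕ → X → X) (hPc : ∀ n, Continuous (P n))
    (hconv : ∀ K : Set X, K ⊆ Nᶜ → IsCompact K →
      TendstoUniformlyOn (fun n => P n) Q atTop K)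
    (ν : ℕ → Measure X) (hνp : ∀ n, IsProbabilityMeasure (ν n))
    (νlim : Measure X) [IsProbabilityMeasure νlim]
    (hweak : ∀ g : C(X, ℝ),
      Tendsto (fun n => ∫ x, g x ∂(ν n)) atTop (nhds (∫ x, g x ∂νlim)))
    (hνN : νlim N = 0) :
    ∀ g : C(X, ℝ),
      Tendsto (fun n => ∫ x, g x ∂(Measure.map (P n) (ν n))) atTop
        (nhds (∫ x, g x ∂(Measure.map Q νlim))) :=
  stmt18_general N hN Q hQc P hPc hconv ν hνp νlim hweak hνN
end
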